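/- Let ω > 0 be a constant and assume the tangential velocity α satisfies the asymptotically uniform redistribution equation ∂_u α(t,u) = g(t,u)·( κ(t,u) β(t,u) − ⟨κβ⟩(t) + ( L(t)/g(t,u) − 1 ) ω ) for all (t,u). Then g(t,u)/L(t) − 1 = e^{−ω t} ( g(0,u)/L(0) − 1 ) for all t ≥ 0 and all u; in particular g(t,·)/L(t) → 1 uniformly in u as t → ∞. -/

import Mathlib

open Real MeasureTheory Function RealInnerProductSpace

local notation "E3" => EuclideanSpace ℝ (Fin 3)

/-!
Since mixed partial derivatives of `X` commute, `∂_t ∂_u X = ∂_u (β N + γ B + α T)`, and pairing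
with `T` (using `α = ⟪∂_t X, T⟫`, `β = ⟪∂_t X, N⟫`) gives the evolution of the local length,
`∂_t g = ∂_u α - g κ β`. For the prescribed `α` this is `∂_t g = -⟨κβ⟩ g + (L - g) ω`;
integrating over a period, `L' = -⟨κβ⟩ L`, so `y = g / L - 1` solves `∂_t y = -ω y` and decays
like `e^{-ω t}`, uniformly because `g(0, ·)` is continuous and periodic.
-/

open Filter Topology

section MixedPartials

variable {E : Type*} [NormedAddCommGroup E] [NormedSpace ℝ E] {F : ℝ × ℝ → E}

lemma HasFDerivAt.hasDerivAt_fst_slice {F' : ℝ × ℝ →L[ℝ] E} {t u : ℝ}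
    (h : HasFDerivAt F F' (t, u)) : HasDerivAt (fun s => F (s, u)) (F' (1, 0)) t :=
  h.comp_hasDerivAt t ((hasDerivAt_id t).prodMk (hasDerivAt_const t u))

lemma HasFDerivAt.hasDerivAt_snd_slice {F' : ℝ × ℝ →L[ℝ] E} {t u : ℝ}
    (h : HasFDerivAt F F' (t, u)) : HasDerivAt (fun w => F (t, w)) (F' (0, 1)) u :=
  h.comp_hasDerivAt u ((hasDerivAt_const u t).prodMk (hasDerivAt_id u))

lemma ContDiff.hasFDerivAt_fderiv_apply (hF : ContDiff ℝ 2 F) (p v : ℝ × ℝ) :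
    HasFDerivAt (fun q => fderiv ℝ F q v) ((fderiv ℝ (fderiv ℝ F) p).flip v) p := by
  have hK : HasFDerivAt (fderiv ℝ F) (fderiv ℝ (fderiv ℝ F) p) p :=
    ((hF.fderiv_right one_add_one_eq_two.le).differentiable one_ne_zero p).hasFDerivAt
  simpa using hK.clm_apply (hasFDerivAt_const v p)

lemma ContDiff.hasDerivAt_fst_slice_of_snd_slice (hF : ContDiff ℝ 2 F) {t u : ℝ} {V : E}
    (hV : HasDerivAt (fun w => fderiv ℝ F (t, w) (1, 0)) V u) :
    HasDerivAt (fun s => fderiv ℝ F (s, u) (0, 1)) V t := by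
  have hsymm := (hF.contDiffAt (x := (t, u))).isSymmSndFDerivAt (by simp)
  rw [hV.unique (hF.hasFDerivAt_fderiv_apply (t, u) (1, 0)).hasDerivAt_snd_slice]
  convert (hF.hasFDerivAt_fderiv_apply (t, u) (0, 1)).hasDerivAt_fst_slice using 1
  exact hsymm.eq _ _

end MixedPartials

lemma Function.Periodic.deriv {E : Type*} [NormedAddCommGroup E] [NormedSpace ℝ E]
    {f : ℝ → E} {c : ℝ} (hf : Periodic f c) : Periodic (deriv f) c := fun x => by
  rw [← deriv_comp_add_const, funext hf]

lemma HasDerivAt.norm_of_ne_zero {E : Type*} [NormedAddCommGroup E] [InnerProductSpace ℝ E]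
    {f : ℝ → E} {f' : E} {x : ℝ} (hf : HasDerivAt f f' x) (h0 : f x ≠ 0) :
    HasDerivAt (fun s => ‖f s‖) (⟪f x, f'⟫ / ‖f x‖) x := by
  have := hf.norm_sq.sqrt (by simpa using h0)
  simp only [sqrt_sq (norm_nonneg _)] at this
  convert this using 1
  field_simp

section Frame

variable {E : Type*} [NormedAddCommGroup E] [InnerProductSpace ℝ E]

lemma inner_deriv_velocity_tangent {T N B : ℝ → E} {α β γ : ℝ → ℝ} {V' : E} {α' k u : ℝ}
    (hV : HasDerivAt (fun w => β w • N w + γ w • B w + α w • T w) V' u)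
    (hT : HasDerivAt T (k • N u) u) (hα : HasDerivAt α α' u)
    (hTnorm : ∀ w, ‖T w‖ = 1) (hTN : ∀ w, ⟪T w, N w⟫ = 0) (hTB : ∀ w, ⟪T w, B w⟫ = 0)
    (hNnorm : ‖N u‖ = 1) (hNB : ⟪N u, B u⟫ = 0) :
    ⟪V', T u⟫ = α' - k * β u := by
  have hVT : (fun w => ⟪β w • N w + γ w • B w + α w • T w, T w⟫) = α := funext fun w => by
    rw [real_inner_comm]
    simp [inner_add_right, real_inner_smul_right, hTN, hTB, hTnorm]
  have hVN : ⟪β u • N u + γ u • B u + α u • T u, N u⟫ = β u := by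
    rw [real_inner_comm]
    simp [inner_add_right, real_inner_smul_right, real_inner_comm (T u), hTN, hNB,
      hNnorm]
  have := (hV.inner ℝ hT).unique (hVT ▸ hα)
  rw [real_inner_smul_right, hVN] at this
  linarith

end Frame

lemma contDiff_local_length {E : Type*} [NormedAddCommGroup E] [InnerProductSpace ℝ E]
    {X Xu : ℝ → ℝ → E} {g : ℝ → ℝ → ℝ}
    (hX2 : ContDiff ℝ 2 (uncurry X))
    (hXu : ∀ t u, HasDerivAt (fun w => X t w) (Xu t u) u)
    (hg : ∀ t u, g t u = ‖Xu t u‖)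
    (hgpos : ∀ t u, 0 < g t u) :
    ContDiff ℝ 1 (uncurry g) := by
  have hXu_eq : ∀ t u, Xu t u = fderiv ℝ (uncurry X) (t, u) (0, 1) := fun t u =>
    (hXu t u).unique (hX2.differentiable two_ne_zero (t, u)).hasFDerivAt.hasDerivAt_snd_slice
  have hXu_C1 : ContDiff ℝ 1 fun p => fderiv ℝ (uncurry X) p (0, 1) :=
    (hX2.fderiv_right one_add_one_eq_two.le).clm_apply contDiff_const
  have hXu_ne : ∀ t u, Xu t u ≠ 0 := fun t u => norm_pos_iff.mp (hg t u ▸ hgpos t u)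
  convert hXu_C1.norm ℝ fun ⟨t, u⟩ => hXu_eq t u ▸ hXu_ne t u with ⟨t, u⟩
  rw [uncurry_apply_pair, hg, hXu_eq]

lemma hasDerivAt_local_length {E : Type*} [NormedAddCommGroup E] [InnerProductSpace ℝ E]
    {X Xu T N B : ℝ → ℝ → E} {g κ α αu β γ : ℝ → ℝ → ℝ}
    (hX2 : ContDiff ℝ 2 (uncurry X))
    (hXu : ∀ t u, HasDerivAt (fun w => X t w) (Xu t u) u)
    (hg : ∀ t u, g t u = ‖Xu t u‖)
    (hgpos : ∀ t u, 0 < g t u)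
    (hT : ∀ t u, T t u = (g t u)⁻¹ • Xu t u)
    (hNnorm : ∀ t u, ‖N t u‖ = 1)
    (hTN : ∀ t u, ⟪T t u, N t u⟫ = 0)
    (hTB : ∀ t u, ⟪T t u, B t u⟫ = 0)
    (hNB : ∀ t u, ⟪N t u, B t u⟫ = 0)
    (hFrenet : ∀ t u, HasDerivAt (fun w => T t w) ((g t u * κ t u) • N t u) u)
    (hαu : ∀ t u, HasDerivAt (fun w => α t w) (αu t u) u)
    (hevol : ∀ t u, HasDerivAt (fun s => X s u)
      (β t u • N t u + γ t u • B t u + α t u • T t u) t)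
    (t u : ℝ) :
    HasDerivAt (fun s => g s u) (αu t u - g t u * κ t u * β t u) t := by
  have hX : ∀ p, HasFDerivAt (uncurry X) (fderiv ℝ (uncurry X) p) p :=
    fun p => (hX2.differentiable two_ne_zero p).hasFDerivAt
  have hXu_eq : ∀ s w, Xu s w = fderiv ℝ (uncurry X) (s, w) (0, 1) :=
    fun s w => (hXu s w).unique (hX (s, w)).hasDerivAt_snd_slice
  have hvel : ∀ w, β t w • N t w + γ t w • B t w + α t w • T t w
      = fderiv ℝ (uncurry X) (t, w) (1, 0) :=
    fun w => (hevol t w).unique (hX (t, w)).hasDerivAt_fst_slice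
  have hXg : Xu t u = g t u • T t u := by
    rw [hT, smul_smul, mul_inv_cancel₀ (hgpos t u).ne', one_smul]
  have hTnorm : ∀ w, ‖T t w‖ = 1 := fun w => by
    rw [hT, norm_smul, norm_inv, norm_of_nonneg (hgpos t w).le, hg, inv_mul_cancel₀]
    exact (hg t w ▸ hgpos t w).ne'
  obtain ⟨V', hV'⟩ : ∃ V', HasDerivAt (fun w => fderiv ℝ (uncurry X) (t, w) (1, 0)) V' u :=
    ⟨_, (hX2.hasFDerivAt_fderiv_apply (t, u) (1, 0)).hasDerivAt_snd_slice⟩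
  have hXut : HasDerivAt (fun s => Xu s u) V' t := by
    simpa only [hXu_eq] using hX2.hasDerivAt_fst_slice_of_snd_slice hV'
  have hvel' : HasDerivAt (fun w => β t w • N t w + γ t w • B t w + α t w • T t w) V' u := by
    simpa only [hvel] using hV'
  have hV'T : ⟪V', T t u⟫ = αu t u - g t u * κ t u * β t u :=
    inner_deriv_velocity_tangent hvel' (hFrenet t u) (hαu t u) hTnorm (hTN t) (hTB t)
      (hNnorm t u) (hNB t u)
  have hgXu : (fun s => g s u) = fun s => ‖Xu s u‖ := funext fun s => hg s u
  rw [hgXu]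
  convert hXut.norm_of_ne_zero (norm_pos_iff.mp (hg t u ▸ hgpos t u)) using 1
  rw [← hg, hXg, real_inner_smul_left, real_inner_comm, hV'T]
  field_simp [(hgpos t u).ne']

lemma hasDerivAt_intervalIntegral_of_contDiff {E : Type*} [NormedAddCommGroup E]
    [NormedSpace ℝ E] {F : ℝ × ℝ → E} (hF : ContDiff ℝ 1 F) (a b t : ℝ) :
    HasDerivAt (fun s => ∫ u in a..b, F (s, u)) (∫ u in a..b, fderiv ℝ F (t, u) (1, 0)) t := by
  have hF' : Continuous fun p => fderiv ℝ F p (1, 0) :=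
    (hF.continuous_fderiv one_ne_zero).clm_apply continuous_const
  obtain ⟨M, hM⟩ := ((isCompact_closedBall t 1).prod isCompact_uIcc).exists_bound_of_continuousOn
    hF'.continuousOn
  refine (intervalIntegral.hasDerivAt_integral_of_dominated_loc_of_deriv_le
    (bound := fun _ => M) (Metric.ball_mem_nhds t one_pos)
    (.of_forall fun s => (hF.continuous.comp (.prodMk_right s)).aestronglyMeasurable)
    ((hF.continuous.comp (.prodMk_right t)).intervalIntegrable a b)
    (hF'.comp (.prodMk_right t)).aestronglyMeasurable
    (.of_forall fun u hu s hs =>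
      hM (s, u) ⟨Metric.ball_subset_closedBall hs, Set.uIoc_subset_uIcc hu⟩)
    intervalIntegrable_const
    (.of_forall fun u _ s _ =>
      (hF.differentiable one_ne_zero (s, u)).hasFDerivAt.hasDerivAt_fst_slice)).2

section Redistribution

variable {g : ℝ → ℝ → ℝ} {L c : ℝ → ℝ} {ω : ℝ}

lemma total_length_pos (hg : ∀ t, Continuous (g t)) (hgpos : ∀ t u, 0 < g t u)
    (hL : ∀ t, L t = ∫ u in (0:ℝ)..1, g t u) (t : ℝ) : 0 < L t :=
  hL t ▸ intervalIntegral.intervalIntegral_pos_of_pos ((hg t).intervalIntegrable 0 1)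
    (hgpos t) one_pos

lemma hasDerivAt_total_length (hg : ContDiff ℝ 1 (uncurry g))
    (hL : ∀ t, L t = ∫ u in (0:ℝ)..1, g t u)
    (hgt : ∀ t u, HasDerivAt (fun s => g s u) (-c t * g t u + (L t - g t u) * ω) t) (t : ℝ) :
    HasDerivAt L (-c t * L t) t := by
  have hpartial : ∀ u, fderiv ℝ (uncurry g) (t, u) (1, 0) = -c t * g t u + (L t - g t u) * ω :=
    fun u => (hg.differentiable one_ne_zero _).hasFDerivAt.hasDerivAt_fst_slice.unique (hgt t u)
  have hgi : IntervalIntegrable (g t) volume 0 1 :=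
    (hg.continuous.comp (.prodMk_right t)).intervalIntegrable 0 1
  have hint : ∫ u in (0:ℝ)..1, (-c t * g t u + (L t - g t u) * ω) = -c t * L t := by
    have hsplit : ∀ u, -c t * g t u + (L t - g t u) * ω = (-c t - ω) * g t u + L t * ω :=
      fun u => by ring
    simp only [hsplit]
    rw [intervalIntegral.integral_add (hgi.const_mul _) intervalIntegrable_const,
      intervalIntegral.integral_const_mul, intervalIntegral.integral_const, ← hL]
    simp only [sub_zero, smul_eq_mul]
    ring
  have h := hasDerivAt_intervalIntegral_of_contDiff hg 0 1 t
  simp only [hpartial, hint] at h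
  exact h.congr_of_eventuallyEq (.of_forall hL)

lemma hasDerivAt_div_total_length_sub_one (hg : ContDiff ℝ 1 (uncurry g))
    (hL : ∀ t, L t = ∫ u in (0:ℝ)..1, g t u) (hL0 : ∀ t, L t ≠ 0)
    (hgt : ∀ t u, HasDerivAt (fun s => g s u) (-c t * g t u + (L t - g t u) * ω) t)
    (u t : ℝ) :
    HasDerivAt (fun s => g s u / L s - 1) (-ω * (g t u / L t - 1)) t := by
  refine (((hgt t u).div (hasDerivAt_total_length hg hL hgt t) (hL0 t)).sub_const 1).congr_deriv ?_
  field_simp [hL0 t]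
  ring

end Redistribution

lemma eq_exp_mul_of_hasDerivAt_eq_neg_mul {y : ℝ → ℝ} {ω : ℝ}
    (hy : ∀ t, HasDerivAt y (-ω * y t) t) (t : ℝ) : y t = exp (-(ω * t)) * y 0 := by
  have hconst : ∀ s, HasDerivAt (fun s => y s * exp (ω * s)) 0 s := fun s => by
    refine ((hy s).mul ((hasDerivAt_id s).const_mul ω).exp).congr_deriv ?_
    simp only [id]
    ring
  have := is_const_of_deriv_eq_zero (fun s => (hconst s).differentiableAt)
    (fun s => (hconst s).deriv) t 0
  rw [mul_zero, exp_zero, mul_one] at this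
  rw [← this, exp_neg]
  field_simp

lemma tendstoUniformly_of_sub_eq_exp_mul {α : Type*} {f : ℝ → α → ℝ} {h : α → ℝ} {c ω : ℝ}
    (hω : 0 < ω) (hh : Bornology.IsBounded (Set.range h))
    (hf : ∀ t x, f t x - c = exp (-(ω * t)) * h x) :
    TendstoUniformly f (fun _ => c) atTop := by
  obtain ⟨M, hM⟩ := isBounded_iff_forall_norm_le.mp hh
  have hdecay : Tendsto (fun t => exp (-(ω * t)) * M) atTop (𝓝 0) := by
    have hexp : Tendsto (fun t => exp (-(ω * t))) atTop (𝓝 0) :=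
      tendsto_exp_atBot.comp (tendsto_neg_atTop_atBot.comp (tendsto_id.const_mul_atTop hω))
    simpa using hexp.mul_const M
  rw [Metric.tendstoUniformly_iff]
  intro ε hε
  filter_upwards [hdecay.eventually_lt_const hε] with t ht x
  rw [dist_comm, Real.dist_eq, hf, abs_mul, abs_exp]
  exact (mul_le_mul_of_nonneg_left (hM _ ⟨x, rfl⟩) (exp_pos _).le).trans_lt ht

theorem asymptotically_uniform_redistribution_general
    (X Xu : ℝ → ℝ → E3)
    (g κ α αu β γ : ℝ → ℝ → ℝ)
    (T N B : ℝ → ℝ → E3)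
    (L : ℝ → ℝ)
    (hX2 : ContDiff ℝ 2 (uncurry X))
    (hXper : ∀ t u, X t (u + 1) = X t u)
    (hXu : ∀ t u, HasDerivAt (fun w => X t w) (Xu t u) u)
    (hg : ∀ t u, g t u = ‖Xu t u‖)
    (hgpos : ∀ t u, 0 < g t u)
    (hT : ∀ t u, T t u = (g t u)⁻¹ • Xu t u)
    (hNnorm : ∀ t u, ‖N t u‖ = 1)
    (hTN : ∀ t u, ⟪T t u, N t u⟫ = 0)
    (hTB : ∀ t u, ⟪T t u, B t u⟫ = 0)
    (hNB : ∀ t u, ⟪N t u, B t u⟫ = 0)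
    (hFrenet : ∀ t u, HasDerivAt (fun w => T t w) ((g t u * κ t u) • N t u) u)
    (hαu : ∀ t u, HasDerivAt (fun w => α t w) (αu t u) u)
    (hevol : ∀ t u, HasDerivAt (fun s => X s u)
      (β t u • N t u + γ t u • B t u + α t u • T t u) t)
    (hL : ∀ t, L t = ∫ u in (0:ℝ)..1, g t u)

    (ω : ℝ) (hω : 0 < ω)
    (hαeq : ∀ t u, αu t u = g t u * (κ t u * β t u
      - (L t)⁻¹ * (∫ w in (0:ℝ)..1, κ t w * β t w * g t w)
      + (L t / g t u - 1) * ω)) :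
    (∀ t : ℝ, 0 ≤ t → ∀ u : ℝ,
      g t u / L t - 1 = Real.exp (-(ω * t)) * (g 0 u / L 0 - 1))
    ∧ TendstoUniformly (fun t u => g t u / L t) (fun _ => (1:ℝ)) Filter.atTop := by
  have hg_C1 := contDiff_local_length hX2 hXu hg hgpos
  have hg_per : Periodic (g 0) 1 := fun u => by
    rw [hg, hg, funext fun w => ((hXu 0 w).deriv).symm, Periodic.deriv (hXper 0)]
  have hLpos := total_length_pos (fun t => hg_C1.continuous.comp (.prodMk_right t)) hgpos hL
  have hgt : ∀ t u, HasDerivAt (fun s => g s u)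
      (-((L t)⁻¹ * ∫ w in (0:ℝ)..1, κ t w * β t w * g t w) * g t u + (L t - g t u) * ω) t :=
    fun t u => (hasDerivAt_local_length hX2 hXu hg hgpos hT hNnorm hTN hTB hNB hFrenet hαu
      hevol t u).congr_deriv (by rw [hαeq]; field_simp [(hgpos t u).ne']; ring)
  have hratio := fun u => eq_exp_mul_of_hasDerivAt_eq_neg_mul
    (hasDerivAt_div_total_length_sub_one hg_C1 hL (fun t => (hLpos t).ne') hgt u)
  refine ⟨fun t _ u => hratio u t, tendstoUniformly_of_sub_eq_exp_mul hω ?_ fun t u => hratio u t⟩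
  have hper : Periodic (fun u => g 0 u / L 0 - 1) 1 := fun u => by simp only [hg_per u]
  exact hper.isBounded_of_continuous one_ne_zero
    (((hg_C1.continuous.comp (.prodMk_right 0)).div_const _).sub continuous_const)

/-- Context: an evolving family of closed space curves `Γ_t` parameterized by `X t u`,
with local length `g = ‖∂_u X‖ > 0`, unit tangent `T = g⁻¹ • ∂_u X`, Frenet-type frame
`(T, N, B)`, curvature `κ` (with `∂_u T = g κ N`), evolving by
`∂_t X = β N + γ B + α T`, and total length `L t = ∫₀¹ g t u du`. -/
theorem asymptotically_uniform_redistribution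
    (X Xu : ℝ → ℝ → E3)
    (g κ α αu β γ : ℝ → ℝ → ℝ)
    (T N B : ℝ → ℝ → E3)
    (L : ℝ → ℝ)
    (hX2 : ContDiff ℝ 2 (uncurry X))
    (hXper : ∀ t u, X t (u + 1) = X t u)
    (hXu : ∀ t u, HasDerivAt (fun w => X t w) (Xu t u) u)
    (hg : ∀ t u, g t u = ‖Xu t u‖)
    (hgpos : ∀ t u, 0 < g t u)
    (hT : ∀ t u, T t u = (g t u)⁻¹ • Xu t u)
    (hN1 : ContDiff ℝ 1 (uncurry N))
    (hB1 : ContDiff ℝ 1 (uncurry B))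
    (hNper : ∀ t u, N t (u + 1) = N t u)
    (hBper : ∀ t u, B t (u + 1) = B t u)
    (hNnorm : ∀ t u, ‖N t u‖ = 1)
    (hBnorm : ∀ t u, ‖B t u‖ = 1)
    (hTN : ∀ t u, ⟪T t u, N t u⟫ = 0)
    (hTB : ∀ t u, ⟪T t u, B t u⟫ = 0)
    (hNB : ∀ t u, ⟪N t u, B t u⟫ = 0)
    (hκc : Continuous (uncurry κ))
    (hFrenet : ∀ t u, HasDerivAt (fun w => T t w) ((g t u * κ t u) • N t u) u)
    (hα1 : ContDiff ℝ 1 (uncurry α))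
    (hβ1 : ContDiff ℝ 1 (uncurry β))
    (hγ1 : ContDiff ℝ 1 (uncurry γ))
    (hαper : ∀ t u, α t (u + 1) = α t u)
    (hβper : ∀ t u, β t (u + 1) = β t u)
    (hγper : ∀ t u, γ t (u + 1) = γ t u)
    (hαu : ∀ t u, HasDerivAt (fun w => α t w) (αu t u) u)
    (hevol : ∀ t u, HasDerivAt (fun s => X s u)
      (β t u • N t u + γ t u • B t u + α t u • T t u) t)
    (hL : ∀ t, L t = ∫ u in (0:ℝ)..1, g t u)

    (ω : ℝ) (hω : 0 < ω)
    (hαeq : ∀ t u, αu t u = g t u * (κ t u * β t u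
      - (L t)⁻¹ * (∫ w in (0:ℝ)..1, κ t w * β t w * g t w)
      + (L t / g t u - 1) * ω)) :
    (∀ t : ℝ, 0 ≤ t → ∀ u : ℝ,
      g t u / L t - 1 = Real.exp (-(ω * t)) * (g 0 u / L 0 - 1))
    ∧ TendstoUniformly (fun t u => g t u / L t) (fun _ => (1:ℝ)) Filter.atTop :=
  asymptotically_uniform_redistribution_general X Xu g κ α αu β γ T N B L hX2 hXper hXu hg hgpos hT
    hNnorm hTN hTB hNB hFrenet hαu hevol hL ω hω hαeq
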